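/- arXiv:2212.07991 — 2 statements merged into one kernel-verified Lean document; each statement's English description precedes it below -/
import Mathlib

section
/- Let q be a prime power, m ≥ 1, k ≥ 1, and Z_1, …, Z_k ⊆ {1, …, n}; set k̃ := max over nonempty Ω ⊆ {1, …, k} of (|∩_{i∈Ω} Z_i| + |Ω|) and assume k̃ ≤ n. Let G ∈ F_{q^m}^{k×n} have rank k and satisfy G_{ij} = 0 for all i ∈ {1, …, k} and j ∈ Z_i. Then for every ordered partition (n_1, …, n_ℓ) of n, the row space of G contains a nonzero codeword of sum-rank weight at most n − k̃ + 1; that is, the minimum sum-rank distance of the generated code is at most n − k̃ + 1. -/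
/-- The `F_q`-rank of a vector over `F_{q^m}`. -/
noncomputable def rankFq (Fq : Type*) {K : Type*} [Field Fq] [Field K] [Algebra Fq K]
    {ι : Type*} (y : ι → K) : ℕ :=
  Module.finrank Fq (Submodule.span Fq (Set.range y))

/-- The sum-rank weight with respect to the ordered partition `(n_1, …, n_ℓ)`. -/
noncomputable def sumRankWt (Fq : Type*) {K : Type*} [Field Fq] [Field K] [Algebra Fq K]
    {ℓ : ℕ} {nn : Fin ℓ → ℕ} (x : ((l : Fin ℓ) × Fin (nn l)) → K) : ℕ :=
  ∑ l : Fin ℓ, rankFq Fq (fun t : Fin (nn l) => x ⟨l, t⟩)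

/-- `k̃ = max_{∅ ≠ Ω ⊆ [k]} (|∩_{i∈Ω} Z_i| + |Ω|)`. -/
def ktilde {k : ℕ} {ι : Type*} [Fintype ι] [DecidableEq ι]
    (Z : Fin k → Finset ι) : ℕ :=
  ((Finset.univ : Finset (Fin k)).powerset.filter Finset.Nonempty).sup
    (fun Ω => (Ω.inf Z).card + Ω.card)

/-!
Choose `Ω` attaining `k̃` and put `J = ⋂_{i ∈ Ω} Z_i`. The rows indexed by `Ω` are linearly
independent and all vanish on `J`, so they span an `|Ω|`-dimensional space of vectors supported
outside `J`. Prescribing `|Ω| - 1` further zero coordinates outside `J` leaves a nonzero vector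
in it, of Hamming weight at most `n - |J| - |Ω| + 1 = n - k̃ + 1`. Finally the sum-rank weight is
at most the Hamming weight, because the `F_q`-span of a block is spanned by its nonzero entries.
-/

open Finset Module

section SumRank

variable (Fq : Type*) {K : Type*} [Field Fq] [Field K] [Algebra Fq K] [DecidableEq K]

theorem rankFq_le_hammingNorm {ι : Type*} [Fintype ι] (y : ι → K) :
    rankFq Fq y ≤ hammingNorm y := by
  let ySupp : {t // y t ≠ 0} → K := fun t => y t
  have hrange : Set.range y ⊆ insert 0 (Set.range ySupp) := by
    rintro _ ⟨t, rfl⟩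
    by_cases ht : y t = 0
    · exact Or.inl ht
    · exact Or.inr ⟨⟨t, ht⟩, rfl⟩
  have hspan : Submodule.span Fq (Set.range y) ≤ Submodule.span Fq (Set.range ySupp) := by
    simpa only [Submodule.span_insert_zero] using Submodule.span_mono (R := Fq) hrange
  have := FiniteDimensional.span_of_finite Fq (Set.finite_range ySupp)
  calc rankFq Fq y ≤ (Set.range ySupp).finrank Fq := Submodule.finrank_mono hspan
    _ ≤ Fintype.card {t // y t ≠ 0} := finrank_range_le_card ySupp
    _ = hammingNorm y := Fintype.card_subtype _

theorem sumRankWt_le_hammingNorm {ℓ : ℕ} {nn : Fin ℓ → ℕ}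
    (x : ((l : Fin ℓ) × Fin (nn l)) → K) :
    sumRankWt Fq x ≤ hammingNorm x := by
  calc sumRankWt Fq x ≤ ∑ l, hammingNorm fun t : Fin (nn l) => x ⟨l, t⟩ :=
        sum_le_sum fun l _ => rankFq_le_hammingNorm Fq _
    _ = hammingNorm x := by
        simp only [hammingNorm, ← card_sigma]
        congr 1
        ext j
        simp

end SumRank

theorem hammingNorm_comp_le_of_injective {α β M : Type*} [Fintype α] [Fintype β] [Zero M]
    [DecidableEq M] (c : β → M) {e : α → β} (he : Function.Injective e) :
    hammingNorm (c ∘ e) ≤ hammingNorm c :=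
  card_le_card_of_injOn e (fun j hj => by simpa using hj) he.injOn

section BlockOffset

variable {ℓ : ℕ} (nn : Fin ℓ → ℕ)

def blockOffset (l : Fin ℓ) : ℕ :=
  ∑ l' ∈ univ.filter (· < l), nn l'

theorem blockOffset_add_le_blockOffset {l₁ l₂ : Fin ℓ} (h : l₁ < l₂) :
    blockOffset nn l₁ + nn l₁ ≤ blockOffset nn l₂ := by
  rw [blockOffset, blockOffset, add_comm, ← sum_insert (by simp)]
  refine sum_le_sum_of_subset fun l hl => ?_
  simp only [mem_insert, mem_filter, mem_univ, true_and] at hl ⊢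
  rcases hl with rfl | hl
  · exact h
  · exact hl.trans h

theorem blockOffset_add_injective :
    Function.Injective fun j : (l : Fin ℓ) × Fin (nn l) => blockOffset nn j.1 + j.2 := by
  have hlt : ∀ j₁ j₂ : (l : Fin ℓ) × Fin (nn l), j₁.1 < j₂.1 →
      blockOffset nn j₁.1 + j₁.2 < blockOffset nn j₂.1 + j₂.2 := fun j₁ j₂ h => by
    have := blockOffset_add_le_blockOffset nn h
    omega
  rintro ⟨l₁, t₁⟩ ⟨l₂, t₂⟩ h
  rcases lt_trichotomy l₁ l₂ with hl | rfl | hl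
  · exact absurd h (hlt _ _ hl).ne
  · simp only [add_right_inj, Fin.val_inj] at h
    rw [h]
  · exact absurd h (hlt _ _ hl).ne'

end BlockOffset

section Hamming

variable {K α : Type*} [Field K] [Fintype α]

theorem Submodule.finrank_add_card_le_of_forall_eq_zero [DecidableEq α]
    (W : Submodule K (α → K)) (J : Finset α) (hW : ∀ c ∈ W, ∀ j ∈ J, c j = 0) :
    finrank K W + #J ≤ Fintype.card α := by
  let restrict := LinearMap.funLeft K K ((↑) : (Jᶜ : Finset α) → α) ∘ₗ W.subtype
  have hinj : Function.Injective restrict := by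
    refine (injective_iff_map_eq_zero _).mpr fun c hc => Subtype.ext (funext fun j => ?_)
    by_cases hj : j ∈ J
    · exact hW c c.2 j hj
    · exact congrFun hc ⟨j, mem_compl.mpr hj⟩
  have hle := LinearMap.finrank_le_finrank_of_injective hinj
  rw [finrank_pi, Fintype.card_coe, card_compl] at hle
  have := card_le_univ J
  omega

theorem Submodule.exists_ne_zero_forall_eq_zero_of_card_lt_finrank (W : Submodule K (α → K))
    (T : Finset α) (hT : #T < finrank K W) : ∃ c ∈ W, c ≠ 0 ∧ ∀ j ∈ T, c j = 0 := by
  let restrict := LinearMap.funLeft K K ((↑) : T → α) ∘ₗ W.subtype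
  obtain ⟨c, hc, hc0⟩ := Submodule.exists_mem_ne_zero_of_ne_bot
    (LinearMap.ker_ne_bot_of_finrank_lt (f := restrict) (by simpa using hT))
  exact ⟨c, c.2, by simpa using hc0, fun j hj => congrFun hc ⟨j, hj⟩⟩

theorem Submodule.exists_ne_zero_hammingNorm_add_le [DecidableEq α] [DecidableEq K]
    (W : Submodule K (α → K)) (J : Finset α) (hW : ∀ c ∈ W, ∀ j ∈ J, c j = 0)
    (hpos : 0 < finrank K W) :
    ∃ c ∈ W, c ≠ 0 ∧ hammingNorm c + #J + finrank K W ≤ Fintype.card α + 1 := by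
  have hdim := W.finrank_add_card_le_of_forall_eq_zero J hW
  -- Killing `finrank W - 1` coordinates outside `J` still leaves a nonzero vector of `W`.
  obtain ⟨T, hTJ, hT⟩ :=
    exists_subset_card_eq (s := Jᶜ) (n := finrank K W - 1) (by rw [card_compl]; omega)
  obtain ⟨c, hcW, hc0, hcT⟩ := W.exists_ne_zero_forall_eq_zero_of_card_lt_finrank T (by omega)
  refine ⟨c, hcW, hc0, ?_⟩
  have hsupp : ({j | c j ≠ 0} : Finset α) ⊆ (J ∪ T)ᶜ := fun j hj => by
    simp only [mem_filter, mem_univ, true_and] at hj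
    simp only [mem_compl, mem_union, not_or]
    exact ⟨fun hjJ => hj (hW c hcW j hjJ), fun hjT => hj (hcT j hjT)⟩
  have hdisj : Disjoint J T := disjoint_right.mpr fun j hj => mem_compl.mp (hTJ hj)
  have := card_le_card hsupp
  rw [card_compl, card_union_of_disjoint hdisj, hT] at this
  unfold hammingNorm
  omega

end Hamming

section Rows

variable {K ι α : Type*} [Field K] [Fintype α] [DecidableEq α] [DecidableEq K]

theorem Matrix.exists_ne_zero_mem_span_row_hammingNorm_add_le (G : Matrix ι α K)
    (hG : LinearIndependent K G.row) (Z : ι → Finset α)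
    (hsupp : ∀ i, ∀ j ∈ Z i, G i j = 0) {Ω : Finset ι} (hΩ : Ω.Nonempty) :
    ∃ c ∈ Submodule.span K (Set.range G.row), c ≠ 0 ∧
      hammingNorm c + #(Ω.inf Z) + #Ω ≤ Fintype.card α + 1 := by
  set W := Submodule.span K (Set.range (G.row ∘ ((↑) : Ω → ι)))
  have hdim : finrank K W = #Ω := by
    rw [finrank_span_eq_card (hG.comp _ Subtype.val_injective), Fintype.card_coe]
  have hW : ∀ c ∈ W, ∀ j ∈ Ω.inf Z, c j = 0 := fun c hc j hj => by
    induction hc using Submodule.span_induction with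
    | mem _ h =>
      obtain ⟨i, rfl⟩ := h
      exact hsupp i j ((Finset.inf_le i.2 : Ω.inf Z ⊆ Z i) hj)
    | zero => rfl
    | add _ _ _ _ h₁ h₂ => simp [h₁, h₂]
    | smul a _ _ h => simp [h]
  obtain ⟨c, hcW, hc0, hc⟩ :=
    W.exists_ne_zero_hammingNorm_add_le _ hW (hdim ▸ hΩ.card_pos)
  refine ⟨c, Submodule.span_mono ?_ hcW, hc0, hdim ▸ hc⟩
  rintro _ ⟨i, rfl⟩
  exact ⟨i, rfl⟩

theorem Matrix.exists_ne_zero_mem_span_row_hammingNorm_add_ktilde_le {k : ℕ} (hk : 0 < k)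
    (G : Matrix (Fin k) α K) (hG : LinearIndependent K G.row) (Z : Fin k → Finset α)
    (hsupp : ∀ i, ∀ j ∈ Z i, G i j = 0) :
    ∃ c ∈ Submodule.span K (Set.range G.row), c ≠ 0 ∧
      hammingNorm c + ktilde Z ≤ Fintype.card α + 1 := by
  obtain ⟨Ω, hΩ, hΩmax⟩ := exists_mem_eq_sup (univ.powerset.filter Finset.Nonempty)
    ⟨{⟨0, hk⟩}, by simp⟩ fun Ω => #(Ω.inf Z) + #Ω
  obtain ⟨c, hc, hc0, hcard⟩ :=
    G.exists_ne_zero_mem_span_row_hammingNorm_add_le hG Z hsupp (mem_filter.mp hΩ).2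
  exact ⟨c, hc, hc0, by rw [ktilde, hΩmax]; omega⟩

end Rows

theorem sumRank_dist_le_of_support_constraints_general
    (n k : ℕ) (Fq K : Type*) [Field Fq]
    [Field K] [Algebra Fq K] (hk : 1 ≤ k)
    (Z : Fin k → Finset (Fin n))
    (G : Matrix (Fin k) (Fin n) K) (hG : G.rank = k)
    (hsupp : ∀ (i : Fin k) (j : Fin n), j ∈ Z i → G i j = 0)
    (ℓ : ℕ) (nn : Fin ℓ → ℕ)
    (e : ((l : Fin ℓ) × Fin (nn l)) → Fin n)
    (he : ∀ j : (l : Fin ℓ) × Fin (nn l),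
      (e j : ℕ) = (∑ l ∈ Finset.univ.filter (fun l' => l' < j.1), nn l) + (j.2 : ℕ)) :
    ∃ c ∈ Submodule.span K (Set.range fun i : Fin k => G i),
      c ≠ 0 ∧ sumRankWt Fq (fun j => c (e j)) ≤ n - ktilde Z + 1 := by
  classical
  have hrows : LinearIndependent K G.row := by
    rw [linearIndependent_iff_card_eq_finrank_span, Fintype.card_fin]
    exact hG.symm.trans G.rank_eq_finrank_span_row
  obtain ⟨c, hc, hc0, hcard⟩ :=
    G.exists_ne_zero_mem_span_row_hammingNorm_add_ktilde_le hk hrows Z hsupp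
  have he_inj : Function.Injective e := fun j₁ j₂ h =>
    blockOffset_add_injective nn (by simp only [blockOffset, ← he, h])
  refine ⟨c, hc, hc0, ?_⟩
  rw [Fintype.card_fin] at hcard
  calc sumRankWt Fq (fun j => c (e j)) ≤ hammingNorm (c ∘ e) := sumRankWt_le_hammingNorm Fq _
    _ ≤ hammingNorm c := hammingNorm_comp_le_of_injective c he_inj
    _ ≤ n - ktilde Z + 1 := by omega

/-- Upper bound on the sum-rank distance of a code with a support-constrained generator
matrix: if `G` has rank `k` and `G_{ij} = 0` for `j ∈ Z_i`, then for every ordered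
partition `(n_1, …, n_ℓ)` of `n` (embedded into `{1,…,n}` via `φ(l,t) = n_1 + ⋯ + n_{l−1} + t`),
the row space of `G` contains a nonzero codeword of sum-rank weight at most `n − k̃ + 1`. -/
theorem sumRank_dist_le_of_support_constraints
    (q m n k : ℕ) (Fq K : Type*) [Field Fq] [Fintype Fq] (hq : Fintype.card Fq = q)
    [Field K] [Algebra Fq K] (hm : Module.finrank Fq K = m) (hm1 : 1 ≤ m) (hk : 1 ≤ k)
    (Z : Fin k → Finset (Fin n)) (hktilde : ktilde Z ≤ n)
    (G : Matrix (Fin k) (Fin n) K) (hG : G.rank = k)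
    (hsupp : ∀ (i : Fin k) (j : Fin n), j ∈ Z i → G i j = 0)
    (ℓ : ℕ) (hℓ : 1 ≤ ℓ) (nn : Fin ℓ → ℕ) (hnn : ∀ l, 1 ≤ nn l)
    (hsum : ∑ l, nn l = n)
    (e : ((l : Fin ℓ) × Fin (nn l)) → Fin n)
    (he : ∀ j : (l : Fin ℓ) × Fin (nn l),
      (e j : ℕ) = (∑ l ∈ Finset.univ.filter (fun l' => l' < j.1), nn l) + (j.2 : ℕ)) :
    ∃ c ∈ Submodule.span K (Set.range fun i : Fin k => G i),
      c ≠ 0 ∧ sumRankWt Fq (fun j => c (e j)) ≤ n - ktilde Z + 1 :=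
  sumRank_dist_le_of_support_constraints_general n k Fq K hk Z G hG hsupp ℓ nn e he
end

section
/- Let q be a prime power and m ≥ 1, and define N_i(α) := α^{(q^i−1)/(q−1)} for α ∈ F_{q^m} and i ≥ 0. Let α_1, …, α_s ∈ F_{q^m} be such that the s×s matrix with (i, j) entry N_{i−1}(α_j) is invertible. Then for every subset S ⊆ {α_1, …, α_s} of size r, the r×r matrix whose (i, j) entry is N_{i−1}(γ_j), where γ_1, …, γ_r enumerate S, is also invertible. (Equivalently: every subset of a P-independent subset of F_{q^m} is P-independent.) -/
/-!
A nonzero vector in the left kernel of the σ-Vandermonde matrix of `γ₁, …, γᵣ` is a nonzero skew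
polynomial `f` of degree `< r` vanishing at every `γⱼ`. If `f(β) ≠ 0`, multiplying `f` on the left
by a suitable degree-one skew polynomial raises the degree by one, keeps the roots of `f` and adds
`β`. Adding the `s − r` remaining points one at a time yields a nonzero skew polynomial of degree
`< s` vanishing at all `αⱼ`, so the full σ-Vandermonde matrix is singular.
-/

open Polynomial Finset FiniteField Matrix

noncomputable section

section CommRing

variable {R : Type*} [CommRing R] (σ : R →+* R)

def truncNorm : ℕ → R → R
  | 0, _ => 1
  | i + 1, x => σ (truncNorm i x) * x

/-- `∑ aᵢ Xⁱ` stands for the skew polynomial `∑ aᵢ tⁱ` of `R[t; σ]`, whose value at `x` is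
`∑ aᵢ Nᵢ(x)`. -/
def skewEval (x : R) : R[X] →ₗ[R] R :=
  lsum fun i => LinearMap.mulRight R (truncNorm σ i x)

lemma skewEval_monomial (x : R) (i : ℕ) (a : R) :
    skewEval σ x (monomial i a) = a * truncNorm σ i x := by
  simp [skewEval, sum_monomial_index]

lemma skewEval_X_mul_map (x : R) (p : R[X]) :
    skewEval σ x (X * p.map σ) = σ (skewEval σ x p) * x := by
  induction p using Polynomial.induction_on' with
  | add p q hp hq => simp only [Polynomial.map_add, mul_add, map_add, hp, hq, add_mul]
  | monomial i a =>
    rw [Polynomial.map_monomial, X_mul_monomial, skewEval_monomial, skewEval_monomial, truncNorm,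
      map_mul, mul_assoc]

lemma truncNorm_frobeniusAlgHom (Fq : Type*) [Field Fq] [Fintype Fq] [Algebra Fq R]
    (i : ℕ) (x : R) :
    truncNorm (frobeniusAlgHom Fq R : R →+* R) i x =
      x ^ ∑ k ∈ range i, Fintype.card Fq ^ k := by
  induction i with
  | zero => simp [truncNorm]
  | succ i ih =>
    rw [truncNorm, ih, sum_range_succ', AlgHom.coe_toRingHom, coe_frobeniusAlgHom]
    simp only [pow_succ, ← sum_mul, pow_zero, pow_mul]

end CommRing

section Field

variable {K : Type*} [Field K] (σ : K →+* K)

/-- Left multiplication of `p` by `p(β) t − σ(p(β)) β` in `K[t; σ]`. -/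
def addRoot (p : K[X]) (β : K) : K[X] :=
  C (skewEval σ β p) * (X * p.map σ) - C (σ (skewEval σ β p) * β) * p

lemma skewEval_addRoot (p : K[X]) (β x : K) :
    skewEval σ x (addRoot σ p β) =
      skewEval σ β p * (σ (skewEval σ x p) * x) - σ (skewEval σ β p) * β * skewEval σ x p := by
  simp only [addRoot, map_sub, ← smul_eq_C_mul, map_smul, skewEval_X_mul_map, smul_eq_mul]

lemma skewEval_addRoot_self (p : K[X]) (β : K) : skewEval σ β (addRoot σ p β) = 0 := by
  rw [skewEval_addRoot]
  ring

lemma skewEval_addRoot_of_skewEval_eq_zero {p : K[X]} {x : K} (hx : skewEval σ x p = 0)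
    (β : K) : skewEval σ x (addRoot σ p β) = 0 := by
  simp [skewEval_addRoot, hx]

lemma natDegree_addRoot {p : K[X]} {β : K} (hβ : skewEval σ β p ≠ 0) :
    (addRoot σ p β).natDegree = p.natDegree + 1 := by
  have hp : p ≠ 0 := by rintro rfl; simp at hβ
  have hlead : (C (skewEval σ β p) * (X * p.map σ)).natDegree = p.natDegree + 1 := by
    rw [natDegree_C_mul hβ, natDegree_X_mul ((Polynomial.map_ne_zero_iff σ.injective).2 hp),
      natDegree_map_eq_of_injective σ.injective]
  have hlower : (C (σ (skewEval σ β p) * β) * p).natDegree < p.natDegree + 1 :=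
    (natDegree_C_mul_le _ _).trans_lt p.natDegree.lt_succ_self
  rw [addRoot, natDegree_sub_eq_left_of_natDegree_lt (hlead ▸ hlower), hlead]

lemma exists_skewEval_eq_zero_on_finset {p : K[X]} (hp : p ≠ 0) (T : Finset K) :
    ∃ p' : K[X], p' ≠ 0 ∧ p'.natDegree ≤ p.natDegree + #T ∧ (∀ x ∈ T, skewEval σ x p' = 0) ∧
      ∀ x, skewEval σ x p = 0 → skewEval σ x p' = 0 := by
  classical
  induction T using Finset.induction_on with
  | empty => exact ⟨p, hp, by simp, by simp, fun _ h => h⟩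
  | insert β T hβT ih =>
    obtain ⟨p₁, hp₁, hdeg, hT, hroots⟩ := ih
    rw [card_insert_of_notMem hβT]
    by_cases hβ : skewEval σ β p₁ = 0
    · exact ⟨p₁, hp₁, by omega, by simpa [hβ] using hT, hroots⟩
    refine ⟨addRoot σ p₁ β, fun h => by simpa [h] using natDegree_addRoot σ hβ, ?_, ?_, ?_⟩
    · rw [natDegree_addRoot σ hβ]
      omega
    · simp only [mem_insert, forall_eq_or_imp, skewEval_addRoot_self, true_and]
      exact fun x hx => skewEval_addRoot_of_skewEval_eq_zero σ (hT x hx) β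
    · exact fun x hx => skewEval_addRoot_of_skewEval_eq_zero σ (hroots x hx) β

def sigmaVandermonde {n : ℕ} (v : Fin n → K) : Matrix (Fin n) (Fin n) K :=
  Matrix.of fun i j => truncNorm σ i (v j)

lemma vecMul_sigmaVandermonde {n : ℕ} (p : degreeLT K n) (v : Fin n → K) :
    degreeLTEquiv K n p ᵥ* sigmaVandermonde σ v = fun j => skewEval σ (v j) p := by
  ext j
  simp only [vecMul, dotProduct, sigmaVandermonde, of_apply, degreeLTEquiv,
    LinearEquiv.coe_mk, LinearMap.coe_mk, AddHom.coe_mk, skewEval, lsum_apply,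
    LinearMap.mulRight_apply]
  exact sum_fin (fun i a => a * truncNorm σ i (v j)) (fun i => zero_mul _) (mem_degreeLT.1 p.2)

lemma det_sigmaVandermonde_eq_zero_iff {n : ℕ} (v : Fin n → K) :
    (sigmaVandermonde σ v).det = 0 ↔
      ∃ p : K[X], p ≠ 0 ∧ p.degree < n ∧ ∀ j, skewEval σ (v j) p = 0 := by
  rw [← exists_vecMul_eq_zero_iff, (degreeLTEquiv K n).surjective.exists]
  simp [vecMul_sigmaVandermonde, funext_iff, mem_degreeLT]

theorem isUnit_det_sigmaVandermonde_comp {s r : ℕ} (α : Fin s → K)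
    (hV : IsUnit (sigmaVandermonde σ α).det) (γ : Fin r → Fin s) (hγ : Function.Injective γ) :
    IsUnit (sigmaVandermonde σ (α ∘ γ)).det := by
  classical
  rw [isUnit_iff_ne_zero] at hV ⊢
  contrapose! hV
  obtain ⟨p, hp, hdeg, hroots⟩ := (det_sigmaVandermonde_eq_zero_iff σ _).1 hV
  obtain ⟨p', hp', hdeg', hT, hroots'⟩ :=
    exists_skewEval_eq_zero_on_finset σ hp ((univ.image γ)ᶜ.image α)
  refine (det_sigmaVandermonde_eq_zero_iff σ α).2 ⟨p', hp', ?_, fun j => ?_⟩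
  · have hcard : #((univ.image γ)ᶜ.image α) ≤ s - r := by
      refine card_image_le.trans ?_
      rw [card_compl, card_image_of_injective _ hγ, card_univ, Fintype.card_fin, Fintype.card_fin]
    have hrs : r ≤ s := by simpa using Fintype.card_le_of_injective γ hγ
    have := (natDegree_lt_iff_degree_lt hp).2 hdeg
    exact (natDegree_lt_iff_degree_lt hp').1 (by omega)
  · by_cases hj : j ∈ univ.image γ
    · obtain ⟨i, -, rfl⟩ := mem_image.1 hj
      exact hroots' _ (hroots i)
    · exact hT _ (mem_image_of_mem α (mem_compl.2 hj))

end Field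

end

theorem subset_of_Pindependent_is_Pindependent_general
    (q s : ℕ) (Fq K : Type*) [Field Fq] [Fintype Fq] (hq : Fintype.card Fq = q)
    [Field K] [Algebra Fq K]
    (α : Fin s → K)
    (hV : IsUnit (Matrix.of fun i j : Fin s =>
      α j ^ ((q ^ (i : ℕ) - 1) / (q - 1))).det)
    (r : ℕ) (γ : Fin r → Fin s) (hγ : Function.Injective γ) :
    IsUnit (Matrix.of fun i j : Fin r =>
      α (γ j) ^ ((q ^ (i : ℕ) - 1) / (q - 1))).det := by
  have hN (i : ℕ) (x : K) :
      x ^ ((q ^ i - 1) / (q - 1)) = truncNorm (frobeniusAlgHom Fq K : K →+* K) i x := by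
    rw [truncNorm_frobeniusAlgHom, hq, Nat.geomSum_eq (hq ▸ Fintype.one_lt_card)]
  simp only [hN] at hV ⊢
  exact isUnit_det_sigmaVandermonde_comp _ α hV γ hγ

/-- Every subset of a P-independent subset of `F_{q^m}` is P-independent: if the
σ-Vandermonde matrix of `α_1, …, α_s` (entry `(i,j)` equal to the truncated norm
`N_{i−1}(α_j) = α_j^{(q^{i−1}−1)/(q−1)}`) is invertible, then so is the σ-Vandermonde
matrix of any subfamily `α_{γ(1)}, …, α_{γ(r)}` (with `γ` injective). -/
theorem subset_of_Pindependent_is_Pindependent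
    (q m s : ℕ) (Fq K : Type*) [Field Fq] [Fintype Fq] (hq : Fintype.card Fq = q)
    [Field K] [Algebra Fq K] (hm : Module.finrank Fq K = m) (hm1 : 1 ≤ m)
    (α : Fin s → K)
    (hV : IsUnit (Matrix.of fun i j : Fin s =>
      α j ^ ((q ^ (i : ℕ) - 1) / (q - 1))).det)
    (r : ℕ) (γ : Fin r → Fin s) (hγ : Function.Injective γ) :
    IsUnit (Matrix.of fun i j : Fin r =>
      α (γ j) ^ ((q ^ (i : ℕ) - 1) / (q - 1))).det :=
  subset_of_Pindependent_is_Pindependent_general q s Fq K hq α hV r γ hγ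
end
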